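/- arXiv:0812.2990 — 3 statements merged into one kernel-verified Lean document; each statement's English description precedes it below -/
import Mathlib

section
/- Let H be a hypergraph and {A, B} a bipartition of its edge set whose border δ({A,B}) is contained in some bag of an optimal tree-decomposition of H. Then tw(H) = max(tw(H/A), tw(H/B)). -/
open Set
open scoped Classical

universe u
variable {V : Type u}

/-- Border of an edge-subset `A` of edge set `E`: vertices incident with an
edge of `A` and with an edge of `E \ A`. -/
def border (E A : Set (Set V)) : Set V :=
  {v | (∃ e ∈ E ∩ A, v ∈ e) ∧ ∃ e ∈ E \ A, v ∈ e}

/-- A tree-decomposition of the hypergraph with vertex set `Vs` and edge set `E`. -/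
structure TreeDecomp (Vs : Set V) (E : Set (Set V)) : Type (u + 1) where
  ι : Type
  T : SimpleGraph ι
  isTree : T.IsTree
  bag : ι → Set V
  cover_vertex : ∀ v ∈ Vs, ∃ i, v ∈ bag i
  cover_edge : ∀ e ∈ E, ∃ i, e ⊆ bag i
  bag_conn : ∀ v : V, {i | v ∈ bag i}.Nonempty → (T.induce {i | v ∈ bag i}).Connected

noncomputable def TreeDecomp.width {Vs : Set V} {E : Set (Set V)}
    (d : TreeDecomp Vs E) : ℕ∞ :=
  ⨆ i, ((d.bag i).encard - 1)

/-- Tree-width of a hypergraph. -/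
noncomputable def tw (Vs : Set V) (E : Set (Set V)) : ℕ∞ :=
  ⨅ d : TreeDecomp Vs E, d.width

/-- Connectivity by a chain of edges. -/
def hconn (E : Set (Set V)) (u w : V) : Prop :=
  Relation.ReflTransGen (fun a b => ∃ e ∈ E, a ∈ e ∧ b ∈ e) u w

/-- An edge set is connected if its sub-hypergraph is connected. -/
def EdgeConnected (X : Set (Set V)) : Prop :=
  ∀ u ∈ ⋃₀ X, ∀ w ∈ ⋃₀ X, hconn X u w

/-- Edges of `H - S`: nonempty traces `e \ S`. -/
def edgesMinus (E : Set (Set V)) (S : Set V) : Set (Set V) :=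
  {x | ∃ e ∈ E, (e \ S).Nonempty ∧ x = e \ S}

/-- `C` is a connected component of the hypergraph with vertex set `W` and edges `E'`. -/
def IsConnCompOf (W : Set V) (E' : Set (Set V)) (C : Set V) : Prop :=
  ∃ u ∈ W, C = {w ∈ W | hconn E' u w}

/-- `e` is a cut-edge of the hypergraph with edge set `E`. -/
def IsCutEdge (E : Set (Set V)) (e : Set V) : Prop :=
  e ∈ E ∧ ∃ u ∈ ⋃₀ (E \ {e}), ∃ w ∈ ⋃₀ (E \ {e}), ¬ hconn (E \ {e}) u w

/-- Edge set of `H/A`: the edges of `A` replaced by one hyperedge on the border. -/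
def contractE (E A : Set (Set V)) : Set (Set V) := (E \ A) ∪ {border E A}

/-- Vertex set of `H/A`. -/
def contractV (Vs : Set V) (E A : Set (Set V)) : Set V := (Vs \ ⋃₀ A) ∪ border E A

/-- An `S`-bridge: a minimal nonempty edge set whose border lies in `S`. -/
def IsSBridge (E : Set (Set V)) (S : Set V) (X : Set (Set V)) : Prop :=
  X.Nonempty ∧ X ⊆ E ∧ border E X ⊆ S ∧
    ∀ Y : Set (Set V), Y.Nonempty → Y ⊆ X → border E Y ⊆ S → Y = X

/-- A p-tree of the hypergraph with edge set `E`: a tree whose internal nodes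
have degree 3 and whose leaves are labelled bijectively with the edges. -/
structure PTree (E : Set (Set V)) : Type (u + 1) where
  ι : Type
  T : SimpleGraph ι
  isTree : T.IsTree
  leafLabel : {i : ι // (T.neighborSet i).ncard = 1} ≃ E
  deg : ∀ i : ι, (T.neighborSet i).ncard = 1 ∨ (T.neighborSet i).ncard = 3

/-- The bag at a node of a p-tree: a leaf gets its edge; an internal node gets
the border of the tripartition of the edges, i.e. all vertices lying on two
edges whose leaves are separated by the node. -/
noncomputable def PTree.bag {E : Set (Set V)} (P : PTree E) (i : P.ι) : Set V :=
  if h : (P.T.neighborSet i).ncard = 1 then (P.leafLabel ⟨i, h⟩ : Set V)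
  else {u | ∃ l1 l2 : {j : P.ι // (P.T.neighborSet j).ncard = 1},
    u ∈ (P.leafLabel l1 : Set V) ∧ u ∈ (P.leafLabel l2 : Set V) ∧
    ∀ p : P.T.Walk l1.1 l2.1, i ∈ p.support}

noncomputable def PTree.width {E : Set (Set V)} (P : PTree E) : ℕ∞ :=
  ⨆ i, ((P.bag i).encard - 1)

/-- The part of the edge tripartition at node `i` lying on the side of `l`. -/
def PTree.sideOf {E : Set (Set V)} (P : PTree E) (i l : P.ι) : Set (Set V) :=
  {e | ∃ h : e ∈ E, ∃ p : P.T.Walk (P.leafLabel.symm ⟨e, h⟩).1 l, i ∉ p.support}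

def PTree.IsPartAt {E : Set (Set V)} (P : PTree E) (i : P.ι) (X : Set (Set V)) : Prop :=
  ∃ l, P.T.Adj i l ∧ X = P.sideOf i l

/-!
A tree-decomposition of `H` with a bag containing the border `δ(A)` is, with the same tree and
bags, a tree-decomposition of `H/A` and of `H/B`, so both contractions have tree-width at most
`tw(H)`. Conversely, in any tree-decompositions of `H/A` and `H/B` the border is an edge, hence
lies in some bag of each. Cutting the bags of the first down to the vertices of `H/A` and those of
the second down to `⋃ A` leaves the border as the only common vertices, and joining the two trees
by an edge between these two bags gives a tree-decomposition of `H` whose width is the larger of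
the two widths.
-/

namespace SimpleGraph

variable {α β γ : Type*} {G : SimpleGraph α} {H : SimpleGraph β}

lemma Reachable.of_sum_inl {a a' : α} (h : (G ⊕g H).Reachable (.inl a) (.inl a')) :
    G.Reachable a a' := by
  let f : α ⊕ β → G.ConnectedComponent :=
    Sum.elim G.connectedComponentMk fun _ ↦ G.connectedComponentMk a
  have hf : ∀ x y, (G ⊕g H).Adj x y → f x = f y := by
    rintro (x | x) (y | y) hxy <;> simp_all [f, ConnectedComponent.eq, Adj.reachable]
  obtain ⟨p⟩ := h
  have hwalk : ∀ {x y} (q : (G ⊕g H).Walk x y), f x = f y := by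
    intro x y q
    induction q with
    | nil => rfl
    | cons hxy _ ih => exact (hf _ _ hxy).trans ih
  exact ConnectedComponent.exact (hwalk p)

lemma Reachable.of_sum_inr {b b' : β} (h : (G ⊕g H).Reachable (.inr b) (.inr b')) :
    H.Reachable b b' :=
  Reachable.of_sum_inl (G := H) (H := G) (h.map Iso.sumComm.toHom)

lemma deleteEdges_sum_inl (a a' : α) :
    (G ⊕g H).deleteEdges {s(Sum.inl a, Sum.inl a')} = G.deleteEdges {s(a, a')} ⊕g H := by
  ext (x | x) (y | y) <;> simp

lemma deleteEdges_sum_inr (b b' : β) :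
    (G ⊕g H).deleteEdges {s(Sum.inr b, Sum.inr b')} = G ⊕g H.deleteEdges {s(b, b')} := by
  ext (x | x) (y | y) <;> simp

lemma IsAcyclic.sum (hG : G.IsAcyclic) (hH : H.IsAcyclic) : (G ⊕g H).IsAcyclic := by
  rw [isAcyclic_iff_forall_adj_isBridge] at *
  rintro (a | b) (a' | b') hadj
  · rw [isBridge_iff, deleteEdges_sum_inl]
    exact fun h ↦ hG (by simpa using hadj) h.of_sum_inl
  · simp at hadj
  · simp at hadj
  · rw [isBridge_iff, deleteEdges_sum_inr]
    exact fun h ↦ hH (by simpa using hadj) h.of_sum_inr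

lemma IsTree.sum_sup_edge (hG : G.IsTree) (hH : H.IsTree) (a : α) (b : β) :
    (G.sum H ⊔ edge (.inl a) (.inr b)).IsTree :=
  ⟨hG.connected.sum_sup_edge hH.connected,
    (hG.isAcyclic.sum hH.isAcyclic).sup_edge_of_not_reachable (not_reachable_sum_inl_inr a b)⟩

lemma Preconnected.induce_image {K : SimpleGraph γ} (f : G →g K) {s : Set α}
    (h : (G.induce s).Preconnected) : (K.induce (f '' s)).Preconnected := by
  rintro ⟨_, x, hx, rfl⟩ ⟨_, y, hy, rfl⟩
  let g : G.induce s →g K.induce (f '' s) := ⟨fun z ↦ ⟨f z, Set.mem_image_of_mem f z.2⟩, f.map_adj⟩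
  exact (h ⟨x, hx⟩ ⟨y, hy⟩).map g

end SimpleGraph

namespace TreeDecomp

variable {V₁ V₂ W : Set V} {E₁ E₂ F : Set (Set V)}

def ofCovers (d : TreeDecomp V₁ E₁) (hW : ∀ v ∈ W, ∃ i, v ∈ d.bag i)
    (hF : ∀ e ∈ F, ∃ i, e ⊆ d.bag i) : TreeDecomp W F where
  ι := d.ι
  T := d.T
  isTree := d.isTree
  bag := d.bag
  cover_vertex := hW
  cover_edge := hF
  bag_conn := d.bag_conn

def restrict (d : TreeDecomp V₁ E₁) (X : Set V) : TreeDecomp (V₁ ∩ X) {e ∈ E₁ | e ⊆ X} where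
  ι := d.ι
  T := d.T
  isTree := d.isTree
  bag i := d.bag i ∩ X
  cover_vertex v hv := (d.cover_vertex v hv.1).imp fun _ hi ↦ ⟨hi, hv.2⟩
  cover_edge e he := (d.cover_edge e he.1).imp fun _ hi ↦ subset_inter hi he.2
  bag_conn v := by
    rintro ⟨i, hvi, hvX⟩
    have hS : {i | v ∈ d.bag i ∩ X} = {i | v ∈ d.bag i} := by ext; simp [hvX]
    rw [hS]
    exact d.bag_conn v ⟨i, hvi⟩

lemma width_restrict_le (d : TreeDecomp V₁ E₁) (X : Set V) : (d.restrict X).width ≤ d.width :=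
  iSup_mono fun _ ↦ tsub_le_tsub_right (encard_mono inter_subset_left) 1

section Glue

variable (d₁ : TreeDecomp V₁ E₁) (d₂ : TreeDecomp V₂ E₂) (i₁ : d₁.ι) (i₂ : d₂.ι)
  (hsep : ∀ v, (∃ i, v ∈ d₁.bag i) → (∃ j, v ∈ d₂.bag j) → v ∈ d₁.bag i₁ ∧ v ∈ d₂.bag i₂)

def glue : TreeDecomp (V₁ ∪ V₂) (E₁ ∪ E₂) where
  ι := d₁.ι ⊕ d₂.ι
  T := d₁.T.sum d₂.T ⊔ SimpleGraph.edge (.inl i₁) (.inr i₂)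
  isTree := d₁.isTree.sum_sup_edge d₂.isTree i₁ i₂
  bag := Sum.elim d₁.bag d₂.bag
  cover_vertex := by
    rintro v (hv | hv)
    · obtain ⟨i, hi⟩ := d₁.cover_vertex v hv
      exact ⟨.inl i, hi⟩
    · obtain ⟨j, hj⟩ := d₂.cover_vertex v hv
      exact ⟨.inr j, hj⟩
  cover_edge := by
    rintro e (he | he)
    · obtain ⟨i, hi⟩ := d₁.cover_edge e he
      exact ⟨.inl i, hi⟩
    · obtain ⟨j, hj⟩ := d₂.cover_edge e he
      exact ⟨.inr j, hj⟩
  bag_conn v hne := by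
    set T := d₁.T.sum d₂.T ⊔ SimpleGraph.edge (.inl i₁) (.inr i₂)
    set S₁ := {i | v ∈ d₁.bag i}
    set S₂ := {j | v ∈ d₂.bag j}
    have hS : {x | v ∈ Sum.elim d₁.bag d₂.bag x} = Sum.inl '' S₁ ∪ Sum.inr '' S₂ := by
      ext (x | x) <;> simp [S₁, S₂]
    have pre₁ : (T.induce (Sum.inl '' S₁)).Preconnected := by
      refine SimpleGraph.Preconnected.induce_image
        ((SimpleGraph.Hom.ofLE le_sup_left).comp SimpleGraph.Embedding.sumInl.toHom) ?_
      exact fun x ↦ (d₁.bag_conn v ⟨x, x.2⟩).preconnected x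
    have pre₂ : (T.induce (Sum.inr '' S₂)).Preconnected := by
      refine SimpleGraph.Preconnected.induce_image
        ((SimpleGraph.Hom.ofLE le_sup_left).comp SimpleGraph.Embedding.sumInr.toHom) ?_
      exact fun x ↦ (d₂.bag_conn v ⟨x, x.2⟩).preconnected x
    rw [hS] at hne ⊢
    rcases S₂.eq_empty_or_nonempty with h₂ | ⟨j, hj⟩
    · rw [h₂, image_empty, union_empty] at hne ⊢
      exact { preconnected := pre₁, nonempty := hne.to_subtype }
    rcases S₁.eq_empty_or_nonempty with h₁ | ⟨i, hi⟩
    · rw [h₁, image_empty, empty_union] at hne ⊢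
      exact { preconnected := pre₂, nonempty := hne.to_subtype }
    obtain ⟨hi₁, hi₂⟩ := hsep v ⟨i, hi⟩ ⟨j, hj⟩
    exact SimpleGraph.connected_induce_union pre₁ pre₂ (mem_image_of_mem _ hi₁)
      (mem_image_of_mem _ hi₂) (by simp [T, SimpleGraph.edge])

lemma width_glue : (d₁.glue d₂ i₁ i₂ hsep).width = d₁.width ⊔ d₂.width :=
  iSup_sum

end Glue

end TreeDecomp

section Treewidth

variable {Vs W : Set V} {E F A : Set (Set V)}

lemma tw_le_width_of_covers (d : TreeDecomp Vs E) (hW : ∀ v ∈ W, ∃ i, v ∈ d.bag i)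
    (hF : ∀ e ∈ F, ∃ i, e ⊆ d.bag i) : tw W F ≤ d.width :=
  iInf_le (fun d' : TreeDecomp W F ↦ d'.width) (d.ofCovers hW hF)

lemma tw_mono (hW : W ⊆ Vs) (hF : F ⊆ E) : tw W F ≤ tw Vs E :=
  le_iInf fun d ↦ tw_le_width_of_covers d (fun v hv ↦ d.cover_vertex v (hW hv))
    fun e he ↦ d.cover_edge e (hF he)

lemma border_diff (E A : Set (Set V)) : border E (E \ A) = border E A := by
  ext v
  simp only [border, mem_ofPred_eq, mem_inter_iff, mem_sdiff, not_and, not_not]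
  grind

lemma tw_contract_le_width (hE : ∀ e ∈ E, e ⊆ Vs) (d : TreeDecomp Vs E) {i : d.ι}
    (hi : border E A ⊆ d.bag i) : tw (contractV Vs E A) (contractE E A) ≤ d.width := by
  refine tw_le_width_of_covers d ?_ ?_
  · rintro v (hv | ⟨⟨e, he, hve⟩, -⟩)
    exacts [d.cover_vertex v hv.1, d.cover_vertex v (hE e he.1 hve)]
  · rintro e (he | rfl)
    exacts [d.cover_edge e he.1, ⟨i, hi⟩]

lemma contractV_inter_sUnion_subset_border :
    contractV Vs E A ∩ ⋃₀ A ⊆ border E A := by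
  rintro v ⟨hv | hv, hvA⟩
  exacts [absurd hvA hv.2, hv]

lemma mem_border_of_mem_sUnion (hA : A ⊆ E) {v : V} (hvA : v ∈ ⋃₀ A) (hvB : v ∈ ⋃₀ (E \ A)) :
    v ∈ border E A := by
  obtain ⟨e, he, hve⟩ := hvA
  exact ⟨⟨e, ⟨hA he, he⟩, hve⟩, hvB⟩

lemma subset_contractV_of_mem_diff (hE : ∀ e ∈ E, e ⊆ Vs) (hA : A ⊆ E) {e : Set V}
    (he : e ∈ E \ A) : e ⊆ contractV Vs E A := by
  intro v hve
  by_cases hvA : v ∈ ⋃₀ A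
  · exact Or.inr (mem_border_of_mem_sUnion hA hvA ⟨e, he, hve⟩)
  · exact Or.inl ⟨hE e he.1 hve, hvA⟩

lemma subset_contractV_union (hA : A ⊆ E) :
    Vs ⊆ contractV Vs E A ∪ contractV Vs E (E \ A) ∩ ⋃₀ A := by
  intro v hv
  by_cases hvA : v ∈ ⋃₀ A
  · by_cases hvB : v ∈ ⋃₀ (E \ A)
    · exact Or.inl (Or.inr (mem_border_of_mem_sUnion hA hvA hvB))
    · exact Or.inr ⟨Or.inl ⟨hv, hvB⟩, hvA⟩
  · exact Or.inl (Or.inl ⟨hv, hvA⟩)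

lemma subset_contractE_union (hE : ∀ e ∈ E, e ⊆ Vs) (hA : A ⊆ E) :
    E ⊆ {e ∈ contractE E A | e ⊆ contractV Vs E A} ∪ {e ∈ contractE E (E \ A) | e ⊆ ⋃₀ A} := by
  intro e he
  by_cases heA : e ∈ A
  · exact Or.inr ⟨Or.inl ⟨he, fun h ↦ h.2 heA⟩, subset_sUnion_of_mem heA⟩
  · exact Or.inl ⟨Or.inl ⟨he, heA⟩, subset_contractV_of_mem_diff hE hA ⟨he, heA⟩⟩

lemma tw_le_max_tw_contract (hE : ∀ e ∈ E, e ⊆ Vs) (hA : A ⊆ E) :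
    tw Vs E ≤ tw (contractV Vs E A) (contractE E A) ⊔
      tw (contractV Vs E (E \ A)) (contractE E (E \ A)) := by
  simp only [tw]
  rw [iInf_sup_eq]
  refine le_iInf fun d₁ ↦ ?_
  rw [sup_iInf_eq]
  refine le_iInf fun d₂ ↦ ?_
  obtain ⟨i₁, hi₁⟩ := d₁.cover_edge _ (Or.inr rfl)
  obtain ⟨i₂, hi₂⟩ := d₂.cover_edge _ (Or.inr rfl)
  rw [border_diff] at hi₂
  -- Bags of `d₁` may contain vertices of `⋃₀ A` off the border: cut both sides down so that
  -- the border is all the two decompositions share.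
  let D₁ := d₁.restrict (contractV Vs E A)
  let D₂ := d₂.restrict (⋃₀ A)
  have hsep : ∀ v, (∃ i, v ∈ D₁.bag i) → (∃ j, v ∈ D₂.bag j) → v ∈ D₁.bag i₁ ∧ v ∈ D₂.bag i₂ := by
    rintro v ⟨-, -, hv₁⟩ ⟨-, -, hv₂⟩
    have hv := contractV_inter_sUnion_subset_border ⟨hv₁, hv₂⟩
    exact ⟨⟨hi₁ hv, hv₁⟩, hi₂ hv, hv₂⟩
  have hVs := subset_contractV_union (Vs := Vs) hA
  rw [← inter_self (contractV Vs E A)] at hVs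
  calc tw Vs E ≤ (D₁.glue D₂ i₁ i₂ hsep).width :=
        (tw_mono hVs (subset_contractE_union hE hA)).trans (iInf_le _ _)
    _ = D₁.width ⊔ D₂.width := TreeDecomp.width_glue ..
    _ ≤ d₁.width ⊔ d₂.width := sup_le_sup (d₁.width_restrict_le _) (d₂.width_restrict_le _)

end Treewidth

theorem tw_eq_max_contractions_general
    (Vs : Set V) (E A : Set (Set V)) (hE : ∀ e ∈ E, e ⊆ Vs)
    (hA : A ⊆ E)
    (d : TreeDecomp Vs E) (hopt : d.width = tw Vs E)
    (hbag : ∃ i, border E A ⊆ d.bag i) :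
    tw Vs E = max (tw (contractV Vs E A) (contractE E A))
                  (tw (contractV Vs E (E \ A)) (contractE E (E \ A))) := by
  obtain ⟨i, hi⟩ := hbag
  refine le_antisymm (tw_le_max_tw_contract hE hA) (max_le ?_ ?_) <;> rw [← hopt]
  · exact tw_contract_le_width hE d hi
  · exact tw_contract_le_width hE d ((border_diff E A).subset.trans hi)

/-- If the border of a bipartition `{A, E \ A}` of the edge set of `H` is
contained in a bag of an optimal tree-decomposition of `H`, then
`tw(H) = max (tw(H/A), tw(H/B))`. -/
theorem tw_eq_max_contractions
    (Vs : Set V) (E A : Set (Set V)) (hE : ∀ e ∈ E, e ⊆ Vs)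
    (hA : A ⊆ E) (hAne : A.Nonempty) (hBne : (E \ A).Nonempty)
    (d : TreeDecomp Vs E) (hopt : d.width = tw Vs E)
    (hbag : ∃ i, border E A ⊆ d.bag i) :
    tw Vs E = max (tw (contractV Vs E A) (contractE E A))
                  (tw (contractV Vs E (E \ A)) (contractE E (E \ A))) :=
  tw_eq_max_contractions_general Vs E A hE hA d hopt hbag
end

section
/- Let H = (V, E) be a hypergraph, S ⊆ V, and X an S-bridge of H that is not a singleton. Then X equals the set of all edges of H incident with at least one vertex of some connected component C of H - S. -/
open Set
open scoped Classical

universe u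
variable {V : Type u}

/-!
An `S`-bridge `X` containing an edge inside `S` is that single edge, so in the non-singleton
case some edge of `X` has a vertex `u ∉ S`. Since the border of `X` lies in `S`, every edge at
a vertex outside `S` that meets an edge of `X` is again in `X`; walking through `H - S` from `u`
shows that all edges incident with the component `C` of `u` lie in `X`. Those edges have their
border in `S` themselves, so minimality of `X` forces equality.
-/

/-- The vertex set of the connected component of `u` in `H - S`. -/
def componentMinus (E : Set (Set V)) (S : Set V) (u : V) : Set V :=
  {w ∈ ⋃₀ E \ S | hconn (edgesMinus E S) u w}

def incidentEdges (E : Set (Set V)) (C : Set V) : Set (Set V) :=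
  {e ∈ E | ∃ v ∈ C, v ∈ e}

lemma border_subset_sUnion (E A : Set (Set V)) : border E A ⊆ ⋃₀ A :=
  fun _ ⟨⟨e, ⟨_, heA⟩, hve⟩, _⟩ => ⟨e, heA, hve⟩

lemma mem_of_notMem_border {E A : Set (Set V)} {e e' : Set V} {v : V}
    (he : e ∈ E ∩ A) (hve : v ∈ e) (hv : v ∉ border E A) (he' : e' ∈ E) (hve' : v ∈ e') :
    e' ∈ A := by
  by_contra he'A
  exact hv ⟨⟨e, he, hve⟩, ⟨e', ⟨he', he'A⟩, hve'⟩⟩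

lemma IsSBridge.eq_singleton_of_subset {E : Set (Set V)} {S : Set V} {X : Set (Set V)}
    {e : Set V} (hX : IsSBridge E S X) (he : e ∈ X) (heS : e ⊆ S) : X = {e} := by
  refine (hX.2.2.2 {e} (singleton_nonempty e) (singleton_subset_iff.2 he) ?_).symm
  calc border E {e} ⊆ ⋃₀ {e} := border_subset_sUnion E {e}
    _ = e := sUnion_singleton e
    _ ⊆ S := heS

lemma incidentEdges_componentMinus_subset {E X : Set (Set V)} {S : Set V} {e : Set V} {u : V}
    (hX : border E X ⊆ S) (he : e ∈ E ∩ X) (hue : u ∈ e) (hu : u ∉ S) :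
    incidentEdges E (componentMinus E S u) ⊆ X := by
  have closed : ∀ w, hconn (edgesMinus E S) u w → ∀ e' ∈ E, w ∈ e' → e' ∈ X := by
    intro w hw
    induction hw with
    | refl => exact fun e' he' hue' => mem_of_notMem_border he hue (fun h => hu (hX h)) he' hue'
    | tail _ hstep ih =>
      obtain ⟨_, ⟨f, hfE, -, rfl⟩, ⟨haf, -⟩, ⟨hbf, hbS⟩⟩ := hstep
      exact fun e' he' hbe' =>
        mem_of_notMem_border ⟨hfE, ih f hfE haf⟩ hbf (fun h => hbS (hX h)) he' hbe'
  rintro e' ⟨he'E, w, ⟨-, huw⟩, hwe'⟩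
  exact closed w huw e' he'E hwe'

lemma border_incidentEdges_componentMinus_subset (E : Set (Set V)) (S : Set V) (u : V) :
    border E (incidentEdges E (componentMinus E S u)) ⊆ S := by
  rintro v ⟨⟨e₁, ⟨he₁E, -, w, hwC, hwe₁⟩, hve₁⟩, ⟨e₂, ⟨he₂E, he₂⟩, hve₂⟩⟩
  by_contra hvS
  have hvC : v ∈ componentMinus E S u :=
    ⟨⟨⟨e₁, he₁E, hve₁⟩, hvS⟩,
      hwC.2.tail ⟨e₁ \ S, ⟨e₁, he₁E, ⟨v, hve₁, hvS⟩, rfl⟩, ⟨hwe₁, hwC.1.2⟩, ⟨hve₁, hvS⟩⟩⟩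
  exact he₂ ⟨he₂E, v, hvC, hve₂⟩

/-- An `S`-bridge which is not a singleton is the set of all edges incident
with some vertex of a connected component of `H - S`. -/
theorem sBridge_of_not_singleton (E : Set (Set V)) (S : Set V)
    (X : Set (Set V)) (hX : IsSBridge E S X) (hns : ¬ ∃ e : Set V, X = {e}) :
    ∃ C : Set V, IsConnCompOf (⋃₀ E \ S) (edgesMinus E S) C ∧
      X = {e ∈ E | ∃ v ∈ C, v ∈ e} := by
  obtain ⟨e, he⟩ := hX.1
  obtain ⟨u, hue, huS⟩ : (e \ S).Nonempty := by
    rw [nonempty_iff_ne_empty, Ne, sdiff_eq_empty]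
    exact fun heS => hns ⟨e, hX.eq_singleton_of_subset he heS⟩
  have heE : e ∈ E := hX.2.1 he
  have hu : u ∈ ⋃₀ E \ S := ⟨⟨e, heE, hue⟩, huS⟩
  refine ⟨componentMinus E S u, ⟨u, hu, rfl⟩, (hX.2.2.2 _ ?_ ?_ ?_).symm⟩
  · exact ⟨e, heE, u, ⟨hu, .refl⟩, hue⟩
  · exact incidentEdges_componentMinus_subset hX.2.2.1 ⟨heE, he⟩ hue huS
  · exact border_incidentEdges_componentMinus_subset E S u
end

section
/- Let T be a p-tree of a hypergraph H (a tree with internal nodes of degree 3 and leaves bijectively labelled by edges of H), viewed as a tree-decomposition by labelling each internal node v with the border δ(μ_v) of the induced edge tripartition. Then tw(H) <= width(T). -/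
open Set
open scoped Classical

universe u
variable {V : Type u}

/-!
Leaf bags are the edges themselves, so the bags cover `H`. A vertex `v` lies in the bag of a
node `i` exactly when `i` lies on every walk between two leaves whose edges contain `v` (for a
leaf `i` because a path passes through a leaf only at its ends). Such a set of nodes contains,
with any two nodes, every node that all walks between them must pass through; in a tree it
therefore contains the path between any two of its nodes and induces a connected subtree.
-/

namespace SimpleGraph

variable {ι : Type*} {G : SimpleGraph ι}

def IsWalkConvex (G : SimpleGraph ι) (S : Set ι) : Prop :=
  ∀ a ∈ S, ∀ b ∈ S, ∀ x, (∀ q : G.Walk a b, x ∈ q.support) → x ∈ S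

lemma IsAcyclic.mem_support_of_mem_support_isPath (hG : G.IsAcyclic) {a b x : ι}
    {p : G.Walk a b} (hp : p.IsPath) (hx : x ∈ p.support) (q : G.Walk a b) :
    x ∈ q.support := by
  have hq : q.toPath = ⟨p, hp⟩ := (hG.subsingleton_path a b).elim _ _
  exact q.support_toPath_subset_support (by rw [hq]; exact hx)

lemma IsAcyclic.preconnected_induce_of_isWalkConvex (hG : G.IsAcyclic) (hconn : G.Preconnected)
    {S : Set ι} (hS : G.IsWalkConvex S) : (G.induce S).Preconnected := by
  rintro ⟨a, ha⟩ ⟨b, hb⟩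
  obtain ⟨p, hp⟩ := hconn.exists_isPath a b
  exact ⟨p.induce S fun x hx => hS a ha b hb x (hG.mem_support_of_mem_support_isPath hp hx)⟩

/-- In a tree, `walkHull L` is the subtree spanned by `L`. -/
def walkHull (G : SimpleGraph ι) (L : Set ι) : Set ι :=
  {x | ∃ a ∈ L, ∃ b ∈ L, ∀ q : G.Walk a b, x ∈ q.support}

lemma isWalkConvex_walkHull (L : Set ι) : G.IsWalkConvex (G.walkHull L) := by
  rintro i ⟨a₁, ha₁, a₂, ha₂, hi⟩ j ⟨b₁, hb₁, b₂, hb₂, hj⟩ k hk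
  by_contra hkL
  simp only [walkHull, Set.mem_ofPred_eq, not_exists, not_and, not_forall] at hkL
  obtain ⟨pa, hpa⟩ := hkL a₁ ha₁ a₂ ha₂
  obtain ⟨pb, hpb⟩ := hkL b₁ hb₁ b₂ hb₂
  obtain ⟨pab, hpab⟩ := hkL a₁ ha₁ b₁ hb₁
  -- `i` and `j` lie on the `k`-avoiding walks `pa` and `pb`, which are linked by `pab`.
  have := hk ((pa.takeUntil i (hi pa)).reverse.append (pab.append (pb.takeUntil j (hj pb))))
  simp only [Walk.mem_support_append_iff, Walk.support_reverse, List.mem_reverse] at this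
  rcases this with h | h | h
  · exact hpa (pa.support_takeUntil_subset_support _ h)
  · exact hpab h
  · exact hpb (pb.support_takeUntil_subset_support _ h)

end SimpleGraph

namespace PTree

variable {E : Set (Set V)} (P : PTree E)

def leavesContaining (v : V) : Set P.ι :=
  {j | ∃ h : (P.T.neighborSet j).ncard = 1, v ∈ (P.leafLabel ⟨j, h⟩ : Set V)}

lemma mem_bag_iff (v : V) (i : P.ι) :
    v ∈ P.bag i ↔ i ∈ P.T.walkHull (P.leavesContaining v) := by
  by_cases hi : (P.T.neighborSet i).ncard = 1
  · rw [PTree.bag, dif_pos hi]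
    constructor
    · exact fun hv => ⟨i, ⟨hi, hv⟩, i, ⟨hi, hv⟩, fun q => q.start_mem_support⟩
    · rintro ⟨a, ⟨ha, hva⟩, b, ⟨hb, hvb⟩, hab⟩
      obtain ⟨p, hp⟩ := P.isTree.connected.preconnected.exists_isPath a b
      have hsub : (P.T.neighborSet i).Subsingleton := by
        obtain ⟨z, hz⟩ := Set.ncard_eq_one.1 hi
        exact hz ▸ Set.subsingleton_singleton
      by_cases hia : i = a
      · subst hia; exact hva
      by_cases hib : i = b
      · subst hib; exact hvb
      exact absurd (hab p) (hp.isTrail.not_mem_support_of_subsingleton_neighborSet hia hib hsub)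
  · rw [PTree.bag, dif_neg hi]
    simp [SimpleGraph.walkHull, leavesContaining, Subtype.exists]

lemma bag_leafLabel_symm (e : E) : P.bag (P.leafLabel.symm e) = e := by
  rw [PTree.bag, dif_pos (P.leafLabel.symm e).2, Subtype.coe_eta, Equiv.apply_symm_apply]

def toTreeDecomp : TreeDecomp (⋃₀ E) E where
  ι := P.ι
  T := P.T
  isTree := P.isTree
  bag := P.bag
  cover_vertex := by
    rintro v ⟨e, he, hv⟩
    exact ⟨P.leafLabel.symm ⟨e, he⟩, by rwa [bag_leafLabel_symm]⟩
  cover_edge e he := ⟨P.leafLabel.symm ⟨e, he⟩, by rw [bag_leafLabel_symm]⟩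
  bag_conn v hne := by
    have hbags : {i | v ∈ P.bag i} = P.T.walkHull (P.leavesContaining v) :=
      Set.ext (P.mem_bag_iff v)
    rw [hbags] at hne ⊢
    exact (SimpleGraph.connected_iff _).2 ⟨P.isTree.isAcyclic.preconnected_induce_of_isWalkConvex
      P.isTree.connected.preconnected (SimpleGraph.isWalkConvex_walkHull _), hne.to_subtype⟩

lemma width_toTreeDecomp : P.toTreeDecomp.width = P.width := rfl

end PTree

/-- A p-tree of `H`, viewed as a tree-decomposition by labelling internal nodes
with borders of the induced edge tripartitions, witnesses `tw(H) ≤ width(T)`. -/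
theorem tw_le_pTree_width (E : Set (Set V)) (P : PTree E) :
    tw (⋃₀ E) E ≤ P.width :=
  (iInf_le TreeDecomp.width P.toTreeDecomp).trans_eq P.width_toTreeDecomp
end
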